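/- arXiv:1809.05697 — 2 statements merged into one kernel-verified Lean document; each statement's English description precedes it below -/
import Mathlib

section
/- For vectors a, b, ā, b̄ in ℝ³ with ‖ā − b̄‖ ≥ d > 0, if 2(ā − b̄)ᵀ(a − b) ≥ ‖ā − b̄‖² + d², then ‖a − b‖ ≥ d. -/
open scoped RealInnerProductSpace

theorem two_mul_inner_sub_norm_sq_le_norm_sq {E : Type*} [NormedAddCommGroup E]
    [InnerProductSpace ℝ E] (u v : E) : 2 * ⟪u, v⟫ - ‖u‖ ^ 2 ≤ ‖v‖ ^ 2 := by
  nlinarith [norm_sub_sq_real u v, sq_nonneg ‖u - v‖]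

theorem le_norm_of_norm_sq_add_sq_le_two_mul_inner {E : Type*} [NormedAddCommGroup E]
    [InnerProductSpace ℝ E] {u v : E} {d : ℝ} (h : ‖u‖ ^ 2 + d ^ 2 ≤ 2 * ⟪u, v⟫) :
    d ≤ ‖v‖ := by
  have hsq : d ^ 2 ≤ ‖v‖ ^ 2 := by
    linarith [two_mul_inner_sub_norm_sq_le_norm_sq u v]
  exact (le_abs_self d).trans (abs_le_of_sq_le_sq hsq (norm_nonneg v))

open EuclideanSpace in
theorem stmt_3_general (a b abar bbar : EuclideanSpace ℝ (Fin 3)) (d : ℝ)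
    (hlin : 2 * inner ℝ (abar - bbar) (a - b) ≥ ‖abar - bbar‖ ^ 2 + d ^ 2) :
    ‖a - b‖ ≥ d :=
  le_norm_of_norm_sq_add_sq_le_two_mul_inner hlin

open EuclideanSpace in
/-- Linearized collision-avoidance constraint implies the original one:
for a, b, ā, b̄ ∈ ℝ³ with ‖ā − b̄‖ ≥ d > 0, if
2⟪ā − b̄, a − b⟫ ≥ ‖ā − b̄‖² + d², then ‖a − b‖ ≥ d. -/
theorem stmt_3 (a b abar bbar : EuclideanSpace ℝ (Fin 3)) (d : ℝ) (hd : 0 < d)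
    (hbar : ‖abar - bbar‖ ≥ d)
    (hlin : 2 * inner ℝ (abar - bbar) (a - b) ≥ ‖abar - bbar‖ ^ 2 + d ^ 2) :
    ‖a - b‖ ≥ d :=
  stmt_3_general a b abar bbar d hlin
end

section
/- In the setting of the previous symmetric trajectory result, the optimal solution can moreover be chosen so that there exists M ∈ {1,…,N/2} with g(x*[n]) ≤ g(x*[M]) = g(x*[M+1]) = ⋯ = g(x*[N/2]) for all n ∈ {1,…,M}; i.e., after reaching the maximal per-step value along the trajectory at time M, the state can be held constant (hovering) until time N/2. -/
/-!
Start from an optimal closed walk `x`. Since `C` is symmetric, the reversed walk is feasible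
too, so we may assume that the first half `x 1, …, x (N/2)` earns at least half of the total
reward. Let `M` maximise `g (x n)` over that half. The walk that follows `x` up to time `M`,
hovers at `x M` (reflexivity of `C`) and retraces `x` back to `x 0 = x₀` at time `N + 1` is
symmetric and feasible; it earns twice the first-half reward with every term after time `M`
raised to `g (x M)`, so it is optimal as well.
-/

open Finset

section Walks

variable {X : Type*}

def IsWalk (C : X → X → Prop) (K : ℕ) (x : ℕ → X) : Prop :=
  ∀ n ∈ Icc 1 K, C (x (n - 1)) (x n)

variable {C : X → X → Prop} {K : ℕ} {x : ℕ → X}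

theorem IsWalk.comp (hsym : ∀ a b, C a b → C b a) (hrefl : ∀ a, C a a) (hx : IsWalk C K x)
    {L : ℕ} {k : ℕ → ℕ} (hkK : ∀ n ≤ L, k n ≤ K)
    (hk : ∀ n ∈ Icc 1 L, k n ≤ k (n - 1) + 1 ∧ k (n - 1) ≤ k n + 1) :
    IsWalk C L (x ∘ k) := by
  intro n hn
  obtain ⟨hup, hdown⟩ := hk n hn
  have hnL := (mem_Icc.1 hn).2
  have hkn := hkK n hnL
  have hkn' := hkK (n - 1) (by omega)
  simp only [Function.comp_apply]
  rcases (by omega : k n = k (n - 1) ∨ k n = k (n - 1) + 1 ∨ k (n - 1) = k n + 1)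
    with hstay | hfwd | hback
  · rw [hstay]
    exact hrefl _
  · have hstep := hx (k n) (mem_Icc.2 ⟨by omega, hkn⟩)
    rwa [show k n - 1 = k (n - 1) by omega] at hstep
  · have hstep := hx (k (n - 1)) (mem_Icc.2 ⟨by omega, hkn'⟩)
    rw [show k (n - 1) - 1 = k n by omega] at hstep
    exact hsym _ _ hstep

theorem IsWalk.reverse (hsym : ∀ a b, C a b → C b a) (hx : IsWalk C K x) :
    IsWalk C K (fun n => x (K - n)) := by
  intro n hn
  have hn' := mem_Icc.1 hn
  have hstep := hx (K + 1 - n) (mem_Icc.2 ⟨by omega, by omega⟩)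
  rw [show K + 1 - n - 1 = K - n by omega] at hstep
  show C (x (K - (n - 1))) (x (K - n))
  rw [show K - (n - 1) = K + 1 - n by omega]
  exact hsym _ _ hstep

end Walks

section Sums

variable {β : Type*} [AddCommMonoid β]

theorem Finset.sum_Icc_reflect (f : ℕ → β) {a b N : ℕ} (hb : b ≤ N) :
    ∑ n ∈ Icc a b, f (N + 1 - n) = ∑ n ∈ Icc (N + 1 - b) (N + 1 - a), f n := by
  refine sum_nbij' (fun n => N + 1 - n) (fun n => N + 1 - n) ?_ ?_ ?_ ?_ (fun _ _ => rfl) <;>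
    intro n hn <;> simp only [mem_Icc] at hn ⊢ <;> omega

theorem Finset.sum_Icc_eq_add_sum_reflect {N : ℕ} (hN : Even N) (f : ℕ → β) :
    ∑ n ∈ Icc 1 N, f n = ∑ n ∈ Icc 1 (N / 2), f n + ∑ n ∈ Icc 1 (N / 2), f (N + 1 - n) := by
  obtain ⟨H, rfl⟩ := hN
  rw [sum_Icc_reflect f (by omega), show (H + H) / 2 = H by omega,
    show H + H + 1 - H = H + 1 by omega, show H + H + 1 - 1 = H + H by omega,
    Icc_add_one_left_eq_Ioc, ← zero_add 1, Icc_add_one_left_eq_Ioc, Icc_add_one_left_eq_Ioc,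
    sum_Ioc_consecutive f (Nat.zero_le H) (by omega)]

end Sums

/-- Time-`n` index of the fly-hover-fly reparametrisation: climb `0, 1, …, M`, hover at `M`,
and descend symmetrically to `0` at time `N + 1`. -/
def flyHoverFly (N M n : ℕ) : ℕ := min M (min n (N + 1 - n))

section FlyHoverFly

variable {N M n : ℕ}

@[simp] theorem flyHoverFly_zero : flyHoverFly N M 0 = 0 := by
  simp [flyHoverFly]

@[simp] theorem flyHoverFly_add_one_self : flyHoverFly N M (N + 1) = 0 := by
  simp [flyHoverFly]

theorem flyHoverFly_reflect (hn : n ≤ N + 1) :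
    flyHoverFly N M (N + 1 - n) = flyHoverFly N M n := by
  unfold flyHoverFly; omega

theorem flyHoverFly_of_le_half (hn : n ≤ N / 2) : flyHoverFly N M n = min M n := by
  unfold flyHoverFly; omega

theorem IsWalk.comp_flyHoverFly {X : Type*} {C : X → X → Prop}
    (hsym : ∀ a b, C a b → C b a) (hrefl : ∀ a, C a a) {x : ℕ → X} (hx : IsWalk C (N + 1) x) :
    IsWalk C (N + 1) (x ∘ flyHoverFly N M) :=
  hx.comp hsym hrefl (fun n _ => by unfold flyHoverFly; omega)
    (fun n _ => by unfold flyHoverFly; omega)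

theorem sum_flyHoverFly {β : Type*} [AddCommMonoid β] (hN : Even N) (f : ℕ → β) :
    ∑ n ∈ Icc 1 N, f (flyHoverFly N M n) = 2 • ∑ n ∈ Icc 1 (N / 2), f (min M n) := by
  rw [sum_Icc_eq_add_sum_reflect hN, two_nsmul]
  have hhalf : ∀ n ∈ Icc 1 (N / 2), f (flyHoverFly N M n) = f (min M n) := fun n hn => by
    rw [flyHoverFly_of_le_half (mem_Icc.1 hn).2]
  congr 1
  · exact sum_congr rfl hhalf
  · refine sum_congr rfl fun n hn => ?_
    rw [flyHoverFly_reflect (by have := (mem_Icc.1 hn).2; omega), hhalf n hn]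

end FlyHoverFly

section Halves

variable {β : Type*} [AddCommMonoid β] [LinearOrder β] [IsOrderedAddMonoid β]

theorem Finset.sum_le_sum_min_of_forall_le (s : Finset ℕ) {f : ℕ → β} {M : ℕ}
    (hM : ∀ n ∈ s, f n ≤ f M) : ∑ n ∈ s, f n ≤ ∑ n ∈ s, f (min M n) :=
  sum_le_sum fun n hn => by
    rcases le_total M n with h | h
    · rw [min_eq_left h]; exact hM n hn
    · rw [min_eq_right h]

theorem exists_walk_sum_le_two_nsmul_sum_half {X : Type*} {C : X → X → Prop}
    (hsym : ∀ a b, C a b → C b a) {N : ℕ} (hN : Even N) {x₀ : X} {x : ℕ → X}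
    (h0 : x 0 = x₀) (hN1 : x (N + 1) = x₀) (hx : IsWalk C (N + 1) x) (g : X → β) :
    ∃ y : ℕ → X, y 0 = x₀ ∧ IsWalk C (N + 1) y ∧
      ∑ n ∈ Icc 1 N, g (x n) ≤ 2 • ∑ n ∈ Icc 1 (N / 2), g (y n) := by
  simp only [sum_Icc_eq_add_sum_reflect hN, two_nsmul]
  rcases le_total (∑ n ∈ Icc 1 (N / 2), g (x (N + 1 - n))) (∑ n ∈ Icc 1 (N / 2), g (x n))
    with h | h
  · exact ⟨x, h0, hx, add_le_add_right h _⟩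
  · exact ⟨fun n => x (N + 1 - n), by simpa using hN1, hx.reverse hsym, add_le_add_left h _⟩

end Halves

theorem stmt_14_general {X : Type*} (N : ℕ) (hN : 0 < N) (hNeven : Even N)
    (C : X → X → Prop) (hsym : ∀ a b, C a b → C b a) (hrefl : ∀ a, C a a)
    (x₀ : X) (g : X → ℝ)
    (Feas : (ℕ → X) → Prop)
    (hFeas : ∀ x, Feas x ↔ (x 0 = x₀ ∧ x (N + 1) = x₀ ∧
      ∀ n ∈ Finset.Icc 1 (N + 1), C (x (n - 1)) (x n)))
    (hopt : ∃ x, Feas x ∧ ∀ y, Feas y →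
      ∑ n ∈ Finset.Icc 1 N, g (y n) ≤ ∑ n ∈ Finset.Icc 1 N, g (x n)) :
    ∃ x, Feas x ∧
      (∀ y, Feas y →
        ∑ n ∈ Finset.Icc 1 N, g (y n) ≤ ∑ n ∈ Finset.Icc 1 N, g (x n)) ∧
      (∀ n ∈ Finset.Icc 1 N, x n = x (N + 1 - n)) ∧
      ∃ M ∈ Finset.Icc 1 (N / 2),
        (∀ n ∈ Finset.Icc 1 M, g (x n) ≤ g (x M)) ∧
        (∀ m ∈ Finset.Icc M (N / 2), g (x m) = g (x M)) := by
  obtain ⟨x, hxFeas, hxopt⟩ := hopt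
  obtain ⟨hx0, hxN, hx⟩ := (hFeas x).1 hxFeas
  obtain ⟨y, hy0, hy, hxy⟩ := exists_walk_sum_le_two_nsmul_sum_half hsym hNeven hx0 hxN hx g
  have hhalf : 1 ≤ N / 2 := by have := hNeven.two_dvd; omega
  obtain ⟨M, hM, hmax⟩ := exists_max_image (Icc 1 (N / 2)) (g ∘ y) ⟨1, mem_Icc.2 ⟨le_rfl, hhalf⟩⟩
  set z := y ∘ flyHoverFly N M
  have hz : ∀ n ≤ N / 2, z n = y (min M n) := fun n hn =>
    congrArg y (flyHoverFly_of_le_half hn)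
  have hM' := mem_Icc.1 hM
  refine ⟨z, (hFeas z).2 ⟨by simp [z, hy0], by simp [z, hy0], hy.comp_flyHoverFly hsym hrefl⟩,
    fun w hw => ?_, fun n hn => ?_, M, hM, fun n hn => ?_, fun m hm => ?_⟩
  · calc ∑ n ∈ Icc 1 N, g (w n) ≤ ∑ n ∈ Icc 1 N, g (x n) := hxopt w hw
      _ ≤ 2 • ∑ n ∈ Icc 1 (N / 2), g (y n) := hxy
      _ ≤ 2 • ∑ n ∈ Icc 1 (N / 2), g (y (min M n)) :=
        nsmul_le_nsmul_right (sum_le_sum_min_of_forall_le _ hmax) 2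
      _ = ∑ n ∈ Icc 1 N, g (z n) := (sum_flyHoverFly hNeven (g ∘ y)).symm
  · exact congrArg y (flyHoverFly_reflect (by have := (mem_Icc.1 hn).2; omega)).symm
  · have hn' := mem_Icc.1 hn
    rw [hz n (by omega), hz M hM'.2, min_eq_right hn'.2, min_self]
    exact hmax n (mem_Icc.2 ⟨hn'.1, by omega⟩)
  · have hm' := mem_Icc.1 hm
    rw [hz m hm'.2, hz M hM'.2, min_eq_left hm'.1, min_self]

/-- Fly-hover-fly optimality (Property 1, equation (9)): with a symmetric and
reflexive step constraint C, there is an optimal symmetric solution and an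
M ∈ {1,…,N/2} such that g(x n) ≤ g(x M) for all n ≤ M and
g(x M) = g(x m) for all M ≤ m ≤ N/2. -/
theorem stmt_14 {X : Type*} (N : ℕ) (hN : 0 < N) (hNeven : Even N)
    (C : X → X → Prop) (hsym : ∀ a b, C a b → C b a) (hrefl : ∀ a, C a a)
    (x₀ : X) (g : X → ℝ) (B : ℝ) (hgbd : ∀ a, |g a| ≤ B)
    (Feas : (ℕ → X) → Prop)
    (hFeas : ∀ x, Feas x ↔ (x 0 = x₀ ∧ x (N + 1) = x₀ ∧
      ∀ n ∈ Finset.Icc 1 (N + 1), C (x (n - 1)) (x n)))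
    (hopt : ∃ x, Feas x ∧ ∀ y, Feas y →
      ∑ n ∈ Finset.Icc 1 N, g (y n) ≤ ∑ n ∈ Finset.Icc 1 N, g (x n)) :
    ∃ x, Feas x ∧
      (∀ y, Feas y →
        ∑ n ∈ Finset.Icc 1 N, g (y n) ≤ ∑ n ∈ Finset.Icc 1 N, g (x n)) ∧
      (∀ n ∈ Finset.Icc 1 N, x n = x (N + 1 - n)) ∧
      ∃ M ∈ Finset.Icc 1 (N / 2),
        (∀ n ∈ Finset.Icc 1 M, g (x n) ≤ g (x M)) ∧
        (∀ m ∈ Finset.Icc M (N / 2), g (x m) = g (x M)) :=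
  stmt_14_general N hN hNeven C hsym hrefl x₀ g Feas hFeas hopt
end
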